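/- arXiv:2503.11391 — 3 statements merged into one kernel-verified Lean document; each statement's English description precedes it below -/
import Mathlib

section
/- For every integer n ≥ 4, set κ_i = (i+1)^2/(i(i+2)) for 1 ≤ i ≤ n−2 and κ_{n-1} = κ_n = n/(n−1). Let U be the n×n real matrix with diagonal entries κ_1, …, κ_n, entries −1 in positions (i, i+1) for 1 ≤ i ≤ n−2 and in position (n−2, n), and 0 elsewhere; let L be the n×n real matrix with diagonal entries κ_1, …, κ_n, entries −1 in positions (i+1, i) for 1 ≤ i ≤ n−2 and in position (n, n−2), and 0 elsewhere. Then in ℝ[X] one has det(X·U + L) = (∏_{i=1}^n κ_i) · (1 + 2X + 2X^2 + … + 2X^{n-1} + X^n). -/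
open Polynomial Finset

noncomputable section StmtAux13

/-- the polynomial `q_m = ∑_{j=0}^m (j+1)(m+1-j) X^j`. -/
def qp13 (m : ℕ) : ℝ[X] :=
  ∑ j ∈ Finset.range (m+1), C (((j:ℝ)+1) * ((m:ℝ)+1-(j:ℝ))) * X^j

/-- the fraction field of `ℝ[X]`. -/
abbrev RK13 := FractionRing (Polynomial ℝ)

def ph13 : ℝ[X] →+* RK13 := algebraMap _ _

def rp13 (m : ℕ) : ℝ[X] := X * qp13 (m+1) + qp13 (m+1) - X * qp13 m

def gp13 (m : ℕ) : ℝ[X] := X * qp13 (m+1) + qp13 (m+1) - C 2 * (X * qp13 m)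

/-- the pivots. -/
def sv13 (m : ℕ) : ℕ → RK13 := fun i =>
  if i ≤ m then
    ph13 (C ((i:ℝ)+2) * qp13 (i+1)) / ph13 (C ((i:ℝ)+3) * qp13 i)
  else if i = m+1 then
    ph13 (C ((m:ℝ)+3) * rp13 m) / ph13 (C ((m:ℝ)+2) * qp13 (m+1))
  else
    ph13 (C ((m:ℝ)+3) * (X * gp13 m + gp13 m)) / ph13 (C ((m:ℝ)+2) * rp13 m)

/-- lower unitriangular factor. -/
def Tm13 (m : ℕ) : Matrix (Fin (m+3)) (Fin (m+3)) RK13 := Matrix.of fun i j =>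
  if (i:ℕ) = (j:ℕ) then 1
  else if ((i:ℕ) = (j:ℕ)+1 ∧ (i:ℕ) ≤ m+1) ∨ ((j:ℕ) = m ∧ (i:ℕ) = m+2) then
    -1 / sv13 m (j:ℕ)
  else if (j:ℕ) = m+1 ∧ (i:ℕ) = m+2 then
    -(ph13 X) / (sv13 m m * sv13 m (m+1))
  else 0

/-- upper triangular factor. -/
def Sm13 (m : ℕ) : Matrix (Fin (m+3)) (Fin (m+3)) RK13 := Matrix.of fun i j =>
  if (i:ℕ) = (j:ℕ) then sv13 m (i:ℕ)
  else if ((j:ℕ) = (i:ℕ)+1 ∧ (j:ℕ) ≤ m+1) ∨ ((i:ℕ) = m ∧ (j:ℕ) = m+2) then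
    -(ph13 X)
  else if (i:ℕ) = m+1 ∧ (j:ℕ) = m+2 then
    -(ph13 X) / sv13 m m
  else 0

lemma qp13_coeff (m k : ℕ) :
    (qp13 m).coeff k = if k ≤ m then ((k:ℝ)+1) * ((m:ℝ)+1-(k:ℝ)) else 0 := by
  classical
  rw [qp13, finset_sum_coeff]
  simp only [coeff_C_mul, coeff_X_pow, mul_ite, mul_one, mul_zero]
  rw [Finset.sum_ite_eq (Finset.range (m+1)) k
    (fun j => ((j:ℝ)+1) * ((m:ℝ)+1-(j:ℝ)))]
  simp [Nat.lt_succ_iff]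

lemma qp13_ne_zero (m : ℕ) : qp13 m ≠ 0 := by
  intro h
  have h0 : (qp13 m).coeff 0 = (m:ℝ)+1 := by simp [qp13_coeff]
  rw [h] at h0
  simp only [coeff_zero] at h0
  have : (0:ℝ) < (m:ℝ)+1 := by positivity
  linarith

lemma qp13_zero : qp13 0 = 1 := by
  simp [qp13]

lemma qp13_one : qp13 1 = C 2 * X + C 2 := by
  simp only [qp13, Finset.sum_range_succ, Finset.range_one, Finset.sum_singleton]
  norm_num
  ring

/-- the key three-term recurrence. -/
lemma qp13_rec (p : ℕ) :
    C ((p:ℝ)+2) * qp13 (p+2) =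
      C ((p:ℝ)+3) * (X * qp13 (p+1)) + C ((p:ℝ)+3) * qp13 (p+1)
        - C ((p:ℝ)+4) * (X * qp13 p) := by
  ext k
  rcases k with _ | k
  · simp only [coeff_sub, coeff_add, coeff_C_mul, mul_coeff_zero, coeff_X_zero,
      qp13_coeff, zero_mul, mul_zero]
    norm_num
    try ring
  · simp only [coeff_sub, coeff_add, coeff_C_mul, coeff_X_mul, qp13_coeff]
    push_cast
    split_ifs <;> push_cast <;>
      try (exfalso; omega)
    all_goals
      first
        | ring1
        | ((obtain rfl : k = p + 1 := by omega); push_cast; ring1)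
        | ((obtain rfl : k = p := by omega); push_cast; ring1)

/-- `g = (X+1) q_{m+1} - 2 X q_m` equals `(m+2)·(1 + X + ⋯ + X^{m+2})`. -/
lemma gp13_eq (m : ℕ) :
    gp13 m = C ((m:ℝ)+2) * ∑ j ∈ Finset.range (m+3), X^j := by
  rw [gp13]
  ext k
  have hσ : (∑ j ∈ Finset.range (m+3), (X:ℝ[X])^j).coeff k
      = if k < m+3 then 1 else 0 := by
    rw [finset_sum_coeff]
    simp only [coeff_X_pow]
    rw [Finset.sum_ite_eq (Finset.range (m+3)) k (fun _ => (1:ℝ))]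
    simp
  rcases k with _ | k
  · simp only [coeff_sub, coeff_add, coeff_C_mul, mul_coeff_zero, coeff_X_zero,
      qp13_coeff, hσ, zero_mul, mul_zero]
    norm_num
    try ring
  · simp only [coeff_sub, coeff_add, coeff_C_mul, coeff_X_mul, qp13_coeff, hσ]
    split_ifs <;> push_cast <;> try (exfalso; omega)
    all_goals
      first
        | ring1
        | ((obtain rfl : k = m + 1 := by omega); push_cast; ring1)
        | ((obtain rfl : k = m := by omega); push_cast; ring1)

lemma rp13_ne_zero (m : ℕ) : rp13 m ≠ 0 := by
  intro h
  have h0 := congrArg (fun p : ℝ[X] => p.coeff 0) h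
  simp only [rp13, coeff_sub, coeff_add, mul_coeff_zero, coeff_X_zero, zero_mul,
    qp13_coeff, coeff_zero] at h0
  norm_num at h0
  nlinarith [h0]

lemma gp13_ne_zero (m : ℕ) : gp13 m ≠ 0 := by
  intro h
  have h0 := congrArg (fun p : ℝ[X] => p.coeff 0) h
  simp only [gp13, coeff_sub, coeff_add, coeff_C_mul, mul_coeff_zero, coeff_X_zero,
    zero_mul, qp13_coeff, coeff_zero] at h0
  norm_num at h0
  nlinarith [h0]

lemma ph13_inj : Function.Injective ph13 :=
  IsFractionRing.injective (Polynomial ℝ) RK13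

lemma ph13_ne {p : ℝ[X]} (h : p ≠ 0) : ph13 p ≠ 0 :=
  (map_ne_zero_iff ph13 ph13_inj).mpr h

lemma sv13_of_le {m i : ℕ} (h : i ≤ m) :
    sv13 m i = ph13 (C ((i:ℝ)+2) * qp13 (i+1)) / ph13 (C ((i:ℝ)+3) * qp13 i) := by
  rw [sv13]; rw [if_pos h]

lemma sv13_top1 (m : ℕ) :
    sv13 m (m+1) = ph13 (C ((m:ℝ)+3) * rp13 m) / ph13 (C ((m:ℝ)+2) * qp13 (m+1)) := by
  rw [sv13]; rw [if_neg (by omega), if_pos rfl]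

lemma sv13_top2 (m : ℕ) :
    sv13 m (m+2) = ph13 (C ((m:ℝ)+3) * (X * gp13 m + gp13 m)) / ph13 (C ((m:ℝ)+2) * rp13 m) := by
  rw [sv13]; rw [if_neg (by omega), if_neg (by omega)]

lemma sv13_ne (m i : ℕ) : sv13 m i ≠ 0 := by
  have hc1 : ∀ k : ℕ, ((k:ℝ)+2) ≠ 0 := by intro k; positivity
  have hc2 : ∀ k : ℕ, ((k:ℝ)+3) ≠ 0 := by intro k; positivity
  rw [sv13]
  split_ifs
  · exact div_ne_zero (ph13_ne (mul_ne_zero (C_ne_zero.mpr (hc1 i)) (qp13_ne_zero _)))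
      (ph13_ne (mul_ne_zero (C_ne_zero.mpr (hc2 i)) (qp13_ne_zero _)))
  · exact div_ne_zero (ph13_ne (mul_ne_zero (C_ne_zero.mpr (hc2 m)) (rp13_ne_zero m)))
      (ph13_ne (mul_ne_zero (C_ne_zero.mpr (hc1 m)) (qp13_ne_zero _)))
  · refine div_ne_zero (ph13_ne (mul_ne_zero (C_ne_zero.mpr (hc2 m)) ?_))
      (ph13_ne (mul_ne_zero (C_ne_zero.mpr (hc1 m)) (rp13_ne_zero m)))
    have : (X * gp13 m + gp13 m : ℝ[X]) = (X + 1) * gp13 m := by ring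
    rw [this]
    exact mul_ne_zero (by
      have := Polynomial.X_add_C_ne_zero (R := ℝ) (1:ℝ)
      simpa using this) (gp13_ne_zero m)


lemma pivot_step13 (a b c d e : ℝ[X]) (ha : ph13 a ≠ 0) (hb : ph13 b ≠ 0) (hd : ph13 d ≠ 0)
    (h : e * (a * d) = X * (b * d) + c * a) :
    ph13 e = -1 / (ph13 a / ph13 b) * -(ph13 X) + ph13 c / ph13 d := by
  have h' := congrArg ph13 h
  simp only [map_mul, map_add] at h'
  have e1 : (-1 : RK13)/(ph13 a/ph13 b) * -(ph13 X) = ph13 X * ph13 b / ph13 a := by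
    rw [div_div_eq_mul_div]
    ring
  rw [e1, div_add_div _ _ ha hd, eq_div_iff (mul_ne_zero ha hd)]
  linear_combination h'

lemma pivot_last13 (a b c e f k : ℝ[X]) (ha : ph13 a ≠ 0) (hb : ph13 b ≠ 0)
    (hc : ph13 c ≠ 0) (hf : ph13 f ≠ 0)
    (h : k * (a*(c*f)) = X*(b*(c*f)) + X^2*(b*(b*f)) + e*(a*c)) :
    ph13 k = -1 / (ph13 a / ph13 b) * -(ph13 X)
      + (-(ph13 X) / ((ph13 a / ph13 b) * (ph13 c / ph13 a))) * (-(ph13 X) / (ph13 a / ph13 b))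
      + ph13 e / ph13 f := by
  have h' := congrArg ph13 h
  simp only [map_mul, map_add, map_pow] at h'
  have e1 : (-1 : RK13)/(ph13 a/ph13 b) * -(ph13 X) = ph13 X * ph13 b / ph13 a := by
    rw [div_div_eq_mul_div]
    ring
  have e2 : (-(ph13 X) / ((ph13 a / ph13 b) * (ph13 c / ph13 a))) * (-(ph13 X) / (ph13 a / ph13 b))
      = ph13 X^2 * (ph13 b * ph13 b) / (ph13 a * ph13 c) := by
    field_simp
  rw [e1, e2, div_add_div _ _ ha (mul_ne_zero ha hc),
    div_add_div _ _ (mul_ne_zero ha (mul_ne_zero ha hc)) hf,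
    eq_div_iff (mul_ne_zero (mul_ne_zero ha (mul_ne_zero ha hc)) hf)]
  linear_combination ph13 a * h'

/-- sum over `Fin n` of a function supported on two points. -/
lemma sum_two13 {n : ℕ} (f : Fin n → RK13) (a b : Fin n) (hab : a ≠ b)
    (h : ∀ k, k ≠ a → k ≠ b → f k = 0) :
    ∑ k, f k = f a + f b := by
  classical
  have hsub : ({a, b} : Finset (Fin n)) ⊆ Finset.univ := Finset.subset_univ _
  rw [← Finset.sum_subset hsub (fun k _ hk => by
    simp only [Finset.mem_insert, Finset.mem_singleton, not_or] at hk
    exact h k hk.1 hk.2)]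
  rw [Finset.sum_insert (by simpa using hab), Finset.sum_singleton]

lemma sum_three13 {n : ℕ} (f : Fin n → RK13) (a b c : Fin n)
    (hab : a ≠ b) (hac : a ≠ c) (hbc : b ≠ c)
    (h : ∀ k, k ≠ a → k ≠ b → k ≠ c → f k = 0) :
    ∑ k, f k = f a + f b + f c := by
  classical
  have hsub : ({a, b, c} : Finset (Fin n)) ⊆ Finset.univ := Finset.subset_univ _
  rw [← Finset.sum_subset hsub (fun k _ hk => by
    simp only [Finset.mem_insert, Finset.mem_singleton, not_or] at hk
    exact h k hk.1 hk.2.1 hk.2.2)]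
  rw [Finset.sum_insert (by simp [hab, hac]), Finset.sum_insert (by simpa using hbc),
    Finset.sum_singleton, add_assoc]

lemma sum_one13 {n : ℕ} (f : Fin n → RK13) (a : Fin n)
    (h : ∀ k, k ≠ a → f k = 0) :
    ∑ k, f k = f a :=
  Finset.sum_eq_single a (fun k _ hk => h k hk) (by simp)

/-- telescoping product of the first pivots. -/
lemma sv13_prod (m t : ℕ) (ht : t ≤ m+1) :
    ∏ i ∈ Finset.range t, sv13 m i
      = ph13 (C 2 * qp13 t) / ph13 (C ((t:ℝ)+2)) := by
  induction t with
  | zero =>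
    rw [Finset.prod_range_zero, qp13_zero, mul_one]
    norm_num
    rw [div_self (ph13_ne (C_ne_zero.mpr (by norm_num)))]
  | succ t ih =>
    have h2 : ((t:ℝ)+2) ≠ 0 := by positivity
    have h3 : ((t:ℝ)+3) ≠ 0 := by positivity
    rw [Finset.prod_range_succ, ih (by omega), sv13_of_le (by omega : t ≤ m)]
    rw [div_mul_div_comm, div_eq_div_iff
      (mul_ne_zero (ph13_ne (C_ne_zero.mpr h2))
        (ph13_ne (mul_ne_zero (C_ne_zero.mpr h3) (qp13_ne_zero t))))
      (ph13_ne (C_ne_zero.mpr (by push_cast; positivity)))]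
    simp only [← map_mul]
    refine congrArg ph13 ?_
    have hC : C ((t:ℝ)+1+2) = C ((t:ℝ)+3) := by congr 1; ring
    push_cast
    rw [hC]
    ring

lemma kappa_prod13 (t : ℕ) :
    ∏ i ∈ Finset.range t, (((i:ℝ)+2)^2/(((i:ℝ)+1)*((i:ℝ)+3)))
      = 2*((t:ℝ)+1)/((t:ℝ)+2) := by
  induction t with
  | zero => norm_num
  | succ t ih =>
    rw [Finset.prod_range_succ, ih]
    have h1 : (t:ℝ)+1 ≠ 0 := by positivity
    have h2 : (t:ℝ)+2 ≠ 0 := by positivity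
    have h3 : (t:ℝ)+3 ≠ 0 := by positivity
    push_cast
    field_simp
    ring

lemma icc_sum13 (t : ℕ) :
    (X:ℝ[X]) * (∑ j ∈ Finset.range (t+1), X^j) + (∑ j ∈ Finset.range (t+1), X^j)
      = 1 + (∑ j ∈ Finset.Icc 1 t, 2*X^j) + X^(t+1) := by
  induction t with
  | zero =>
    simp
    ring
  | succ t ih =>
    rw [Finset.sum_range_succ, Finset.sum_Icc_succ_top (by omega : 1 ≤ t+1)]
    linear_combination ih

end StmtAux13

set_option maxHeartbeats 1600000 in
/-- Type `D_n`: `det(X·U_κ + L_κ) = (∏ κ_i)·(1 + 2X + ⋯ + 2X^{n-1} + Xⁿ)`,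
where `κ_i = (i+1)²/(i(i+2))` for `1 ≤ i ≤ n-2` and `κ_{n-1} = κ_n = n/(n-1)`
(indices below are 0-based; the Dynkin edges are `{i,i+1}`, `1 ≤ i ≤ n-2`,
and `{n-2, n}` in 1-based labels). -/
theorem stmt13 (n : ℕ) (hn : 4 ≤ n)
    (κ : Fin n → ℝ)
    (hκ : ∀ i : Fin n, κ i =
      if n - 2 ≤ (i : ℕ) then (n : ℝ) / ((n : ℝ) - 1)
      else ((i : ℕ) + 2 : ℝ) ^ 2 / ((((i : ℕ) : ℝ) + 1) * (((i : ℕ) : ℝ) + 3)))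
    (U L : Matrix (Fin n) (Fin n) ℝ)
    (hU : ∀ i j, U i j = if i = j then κ i
      else if ((j : ℕ) = (i : ℕ) + 1 ∧ (j : ℕ) ≤ n - 2) ∨
              ((i : ℕ) = n - 3 ∧ (j : ℕ) = n - 1) then -1 else 0)
    (hL : ∀ i j, L i j = if i = j then κ i
      else if ((i : ℕ) = (j : ℕ) + 1 ∧ (i : ℕ) ≤ n - 2) ∨
              ((j : ℕ) = n - 3 ∧ (i : ℕ) = n - 1) then -1 else 0) :
    ((X : ℝ[X]) • U.map C + L.map C).det =
      C (∏ i, κ i) *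
        (1 + (∑ j ∈ Finset.Icc 1 (n - 1), 2 * X ^ j) + X ^ n) := by
  obtain ⟨m, hm1, rfl⟩ : ∃ m, 1 ≤ m ∧ n = m + 3 := ⟨n - 3, by omega, by omega⟩
  have hqne : ∀ k, ph13 (qp13 k) ≠ 0 := fun k => ph13_ne (qp13_ne_zero k)
  have hrne : ph13 (rp13 m) ≠ 0 := ph13_ne (rp13_ne_zero m)
  have hsne : ∀ i, sv13 m i ≠ 0 := sv13_ne m
  apply ph13_inj
  rw [RingHom.map_det]
  have hfact : ph13.mapMatrix ((X : ℝ[X]) • U.map C + L.map C) = Tm13 m * Sm13 m := by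
    ext i j
    rw [RingHom.mapMatrix_apply, Matrix.map_apply, Matrix.mul_apply]
    simp only [Matrix.add_apply, Matrix.smul_apply, Matrix.map_apply, smul_eq_mul]
    have hilt : (i:ℕ) < m+3 := i.isLt
    have hjlt : (j:ℕ) < m+3 := j.isLt
    by_cases hi0 : (i:ℕ) = 0
    · -- CASE A : row 0
      have hz : ∀ k : Fin (m+3), k ≠ i → Tm13 m i k * Sm13 m k j = 0 := by
        intro k hk
        have hkv : (k:ℕ) ≠ (i:ℕ) := fun h => hk (Fin.ext h)
        have hT : Tm13 m i k = 0 := by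
          simp only [Tm13, Matrix.of_apply]
          rw [if_neg (by omega), if_neg (by omega), if_neg (by omega)]
        rw [hT, zero_mul]
      have hTii : Tm13 m i i = 1 := by simp [Tm13]
      rw [sum_one13 _ i hz, hTii, one_mul]
      by_cases hj0 : (j:ℕ) = 0
      · -- A1 : (0,0)
        have hij : i = j := Fin.ext (by omega)
        have hu : U i j = 4/3 := by
          rw [hU i j, if_pos hij, hκ i, if_neg (by omega), hi0]
          norm_num
        have hl : L i j = 4/3 := by
          rw [hL i j, if_pos hij, hκ i, if_neg (by omega), hi0]
          norm_num
        have hS : Sm13 m i j = ph13 (C 2 * qp13 1) / ph13 (C 3 * qp13 0) := by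
          simp only [Sm13, Matrix.of_apply]
          rw [if_pos (by omega), hi0, sv13_of_le (by omega : 0 ≤ m)]
          norm_num
        rw [hu, hl, hS, qp13_zero, mul_one, qp13_one]
        rw [eq_div_iff (ph13_ne (C_ne_zero.mpr (by norm_num : (3:ℝ) ≠ 0)))]
        simp only [← map_mul]
        refine congrArg ph13 ?_
        have hC : C ((4:ℝ)/3) * C (3:ℝ) = C (2:ℝ) * C 2 := by
          rw [← C_mul, ← C_mul]; norm_num
        linear_combination (X + 1) * hC
      · by_cases hj1 : (j:ℕ) = 1
        · -- A2 : (0,1)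
          have hu : U i j = -1 := by
            rw [hU i j, if_neg (fun h => absurd (congrArg Fin.val h) (by omega)), if_pos (by omega)]
          have hl : L i j = 0 := by
            rw [hL i j, if_neg (fun h => absurd (congrArg Fin.val h) (by omega)), if_neg (by omega)]
          have hS : Sm13 m i j = -(ph13 X) := by
            simp only [Sm13, Matrix.of_apply]
            rw [if_neg (by omega), if_pos (by omega)]
          rw [hu, hl, hS]
          rw [show (X * C (-1:ℝ) + C 0 : ℝ[X]) = -X by simp, map_neg]
        · -- A3 : (0, ≥2)
          have hu : U i j = 0 := by
            rw [hU i j, if_neg (fun h => absurd (congrArg Fin.val h) (by omega)), if_neg (by omega)]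
          have hl : L i j = 0 := by
            rw [hL i j, if_neg (fun h => absurd (congrArg Fin.val h) (by omega)), if_neg (by omega)]
          have hS : Sm13 m i j = 0 := by
            simp only [Sm13, Matrix.of_apply]
            rw [if_neg (by omega), if_neg (by omega), if_neg (by omega)]
          rw [hu, hl, hS]
          simp
    · by_cases hitop : (i:ℕ) = m+2
      · -- CASE C : row m+2
        obtain ⟨av, hav⟩ : ∃ a : Fin (m+3), (a:ℕ) = m := ⟨⟨m, by omega⟩, rfl⟩
        obtain ⟨bv, hbv⟩ : ∃ b : Fin (m+3), (b:ℕ) = m+1 := ⟨⟨m+1, by omega⟩, rfl⟩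
        have hz : ∀ k : Fin (m+3), k ≠ av → k ≠ bv → k ≠ i → Tm13 m i k * Sm13 m k j = 0 := by
          intro k hka hkb hki
          have h1 : (k:ℕ) ≠ m := fun h => hka (Fin.ext (by omega))
          have h2 : (k:ℕ) ≠ m+1 := fun h => hkb (Fin.ext (by omega))
          have h3 : (k:ℕ) ≠ (i:ℕ) := fun h => hki (Fin.ext h)
          have hT : Tm13 m i k = 0 := by
            simp only [Tm13, Matrix.of_apply]
            rw [if_neg (by omega), if_neg (by omega), if_neg (by omega)]
          rw [hT, zero_mul]
        have hTa : Tm13 m i av = -1 / sv13 m m := by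
          simp only [Tm13, Matrix.of_apply]
          rw [if_neg (by omega), if_pos (by omega), hav]
        have hTb : Tm13 m i bv = -(ph13 X) / (sv13 m m * sv13 m (m+1)) := by
          simp only [Tm13, Matrix.of_apply]
          rw [if_neg (by omega), if_neg (by omega), if_pos (by omega)]
        have hTii : Tm13 m i i = 1 := by simp [Tm13]
        rw [sum_three13 _ av bv i (fun h => absurd (congrArg Fin.val h) (by omega))
          (fun h => absurd (congrArg Fin.val h) (by omega))
          (fun h => absurd (congrArg Fin.val h) (by omega)) hz,
          hTa, hTb, hTii, one_mul]
        by_cases hjm : (j:ℕ) = m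
        · -- C1
          have hSa : Sm13 m av j = sv13 m m := by
            simp only [Sm13, Matrix.of_apply]
            rw [if_pos (by omega), hav]
          have hSb : Sm13 m bv j = 0 := by
            simp only [Sm13, Matrix.of_apply]
            rw [if_neg (by omega), if_neg (by omega), if_neg (by omega)]
          have hSi : Sm13 m i j = 0 := by
            simp only [Sm13, Matrix.of_apply]
            rw [if_neg (by omega), if_neg (by omega), if_neg (by omega)]
          have hu : U i j = 0 := by
            rw [hU i j, if_neg (fun h => absurd (congrArg Fin.val h) (by omega)), if_neg (by omega)]
          have hl : L i j = -1 := by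
            rw [hL i j, if_neg (fun h => absurd (congrArg Fin.val h) (by omega)), if_pos (by omega)]
          rw [hSa, hSb, hSi, hu, hl, mul_zero, add_zero, add_zero,
            div_mul_cancel₀ _ (hsne m)]
          rw [show (X * C (0:ℝ) + C (-1) : ℝ[X]) = -1 by simp]
          simp
        · by_cases hjm1 : (j:ℕ) = m+1
          · -- C2
            have hSa : Sm13 m av j = -(ph13 X) := by
              simp only [Sm13, Matrix.of_apply]
              rw [if_neg (by omega), if_pos (by omega)]
            have hSb : Sm13 m bv j = sv13 m (m+1) := by
              simp only [Sm13, Matrix.of_apply]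
              rw [if_pos (by omega), hbv]
            have hSi : Sm13 m i j = 0 := by
              simp only [Sm13, Matrix.of_apply]
              rw [if_neg (by omega), if_neg (by omega), if_neg (by omega)]
            have hu : U i j = 0 := by
              rw [hU i j, if_neg (fun h => absurd (congrArg Fin.val h) (by omega)), if_neg (by omega)]
            have hl : L i j = 0 := by
              rw [hL i j, if_neg (fun h => absurd (congrArg Fin.val h) (by omega)), if_neg (by omega)]
            rw [hSa, hSb, hSi, hu, hl]
            rw [show (X * C (0:ℝ) + C 0 : ℝ[X]) = 0 by simp, map_zero]
            field_simp [hsne m, hsne (m+1)]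
            try ring
          · by_cases hjm2 : (j:ℕ) = m+2
            · -- C3 : diagonal (m+2, m+2), identity E4
              have hij : i = j := Fin.ext (by omega)
              have hSa : Sm13 m av j = -(ph13 X) := by
                simp only [Sm13, Matrix.of_apply]
                rw [if_neg (by omega), if_pos (by omega)]
              have hSb : Sm13 m bv j = -(ph13 X) / sv13 m m := by
                simp only [Sm13, Matrix.of_apply]
                rw [if_neg (by omega), if_neg (by omega), if_pos (by omega)]
              have hSi : Sm13 m i j = sv13 m (m+2) := by
                simp only [Sm13, Matrix.of_apply]
                rw [if_pos (by omega), hitop]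
              have hu : U i j = ((m:ℝ)+3)/((m:ℝ)+2) := by
                rw [hU i j, if_pos hij, hκ i, if_pos (by omega)]
                push_cast
                ring
              have hl : L i j = ((m:ℝ)+3)/((m:ℝ)+2) := by
                rw [hL i j, if_pos hij, hκ i, if_pos (by omega)]
                push_cast
                ring
              rw [hSa, hSb, hSi, hu, hl]
              rw [sv13_of_le (le_refl m), sv13_top1 m, sv13_top2 m]
              have hC2 : C (((m:ℝ)+3)/((m:ℝ)+2)) * C ((m:ℝ)+2) = C ((m:ℝ)+3) := by
                rw [← C_mul]
                congr 1
                field_simp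
              have hR : rp13 m = X * qp13 (m+1) + qp13 (m+1) - X * qp13 m := rfl
              have hg : gp13 m = rp13 m - X * qp13 m := by
                rw [rp13, gp13, map_ofNat]
                ring
              refine pivot_last13 _ _ _ _ _ _
                (ph13_ne (mul_ne_zero (C_ne_zero.mpr (by positivity)) (qp13_ne_zero _)))
                (ph13_ne (mul_ne_zero (C_ne_zero.mpr (by positivity)) (qp13_ne_zero _)))
                (ph13_ne (mul_ne_zero (C_ne_zero.mpr (by positivity)) (rp13_ne_zero _)))
                (ph13_ne (mul_ne_zero (C_ne_zero.mpr (by positivity)) (rp13_ne_zero _))) ?_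
              linear_combination
                ((X+1) * C ((m:ℝ)+2) * C ((m:ℝ)+3) * qp13 (m+1) * rp13 m^2) * hC2
                + (-((X+1) * C ((m:ℝ)+2) * C ((m:ℝ)+3)^2 * qp13 (m+1) * rp13 m)) * hg
                + (-(X * C ((m:ℝ)+2) * C ((m:ℝ)+3)^2 * qp13 m * rp13 m)) * hR
            · -- C4 : j < m
              have hSa : Sm13 m av j = 0 := by
                simp only [Sm13, Matrix.of_apply]
                rw [if_neg (by omega), if_neg (by omega), if_neg (by omega)]
              have hSb : Sm13 m bv j = 0 := by
                simp only [Sm13, Matrix.of_apply]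
                rw [if_neg (by omega), if_neg (by omega), if_neg (by omega)]
              have hSi : Sm13 m i j = 0 := by
                simp only [Sm13, Matrix.of_apply]
                rw [if_neg (by omega), if_neg (by omega), if_neg (by omega)]
              have hu : U i j = 0 := by
                rw [hU i j, if_neg (fun h => absurd (congrArg Fin.val h) (by omega)), if_neg (by omega)]
              have hl : L i j = 0 := by
                rw [hL i j, if_neg (fun h => absurd (congrArg Fin.val h) (by omega)), if_neg (by omega)]
              rw [hSa, hSb, hSi, hu, hl]
              simp
      · -- CASE B : rows 1..m+1
        have hi1 : 1 ≤ (i:ℕ) := by omega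
        have hile : (i:ℕ) ≤ m+1 := by omega
        obtain ⟨p, hpi⟩ : ∃ p, (i:ℕ) = p + 1 := ⟨(i:ℕ)-1, by omega⟩
        have hplem : p ≤ m := by omega
        obtain ⟨av, hav⟩ : ∃ a : Fin (m+3), (a:ℕ) = p := ⟨⟨p, by omega⟩, rfl⟩
        have hz : ∀ k : Fin (m+3), k ≠ av → k ≠ i → Tm13 m i k * Sm13 m k j = 0 := by
          intro k hka hki
          have h1 : (k:ℕ) ≠ p := fun h => hka (Fin.ext (by omega))
          have h3 : (k:ℕ) ≠ (i:ℕ) := fun h => hki (Fin.ext h)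
          have hT : Tm13 m i k = 0 := by
            simp only [Tm13, Matrix.of_apply]
            rw [if_neg (by omega), if_neg (by omega), if_neg (by omega)]
          rw [hT, zero_mul]
        have hTa : Tm13 m i av = -1 / sv13 m p := by
          simp only [Tm13, Matrix.of_apply]
          rw [if_neg (by omega), if_pos (by omega), hav]
        have hTii : Tm13 m i i = 1 := by simp [Tm13]
        rw [sum_two13 _ av i (fun h => absurd (congrArg Fin.val h) (by omega)) hz, hTa, hTii, one_mul]
        by_cases hjp : (j:ℕ) = p
        · -- B1 : subdiagonal
          have hSa : Sm13 m av j = sv13 m p := by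
            simp only [Sm13, Matrix.of_apply]
            rw [if_pos (by omega), hav]
          have hSi : Sm13 m i j = 0 := by
            simp only [Sm13, Matrix.of_apply]
            rw [if_neg (by omega), if_neg (by omega), if_neg (by omega)]
          have hu : U i j = 0 := by
            rw [hU i j, if_neg (fun h => absurd (congrArg Fin.val h) (by omega)), if_neg (by omega)]
          have hl : L i j = -1 := by
            rw [hL i j, if_neg (fun h => absurd (congrArg Fin.val h) (by omega)), if_pos (by omega)]
          rw [hSa, hSi, hu, hl, add_zero, div_mul_cancel₀ _ (hsne p)]
          rw [show (X * C (0:ℝ) + C (-1) : ℝ[X]) = -1 by simp]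
          simp
        · by_cases hjd : (j:ℕ) = (i:ℕ)
          · -- B2 : diagonal, identities E1 / E2
            have hij : i = j := Fin.ext (by omega)
            have hSa : Sm13 m av j = -(ph13 X) := by
              simp only [Sm13, Matrix.of_apply]
              rw [if_neg (by omega), if_pos (by omega)]
            have hSi : Sm13 m i j = sv13 m ((i:ℕ)) := by
              simp only [Sm13, Matrix.of_apply]
              rw [if_pos (by omega)]
            rw [hSa, hSi]
            by_cases hmid : (i:ℕ) ≤ m
            · -- E1
              have hu : U i j = ((p:ℝ)+3)^2/(((p:ℝ)+2)*((p:ℝ)+4)) := by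
                rw [hU i j, if_pos hij, hκ i, if_neg (by omega), hpi]
                push_cast
                ring
              have hl : L i j = ((p:ℝ)+3)^2/(((p:ℝ)+2)*((p:ℝ)+4)) := by
                rw [hL i j, if_pos hij, hκ i, if_neg (by omega), hpi]
                push_cast
                ring
              rw [hu, hl, hpi]
              rw [sv13_of_le hplem, sv13_of_le (by omega : p+1 ≤ m)]
              rw [show (((p+1:ℕ):ℝ)+2) = ((p:ℝ)+3) from by push_cast; ring,
                show (((p+1:ℕ):ℝ)+3) = ((p:ℝ)+4) from by push_cast; ring,
                show p+1+1 = p+2 by omega]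
              have hK : C (((p:ℝ)+3)^2/(((p:ℝ)+2)*((p:ℝ)+4))) * (C ((p:ℝ)+2) * C ((p:ℝ)+4))
                  = C ((p:ℝ)+3) * C ((p:ℝ)+3) := by
                rw [← C_mul, ← C_mul, ← C_mul]
                congr 1
                field_simp
              refine pivot_step13 _ _ _ _ _
                (ph13_ne (mul_ne_zero (C_ne_zero.mpr (by positivity)) (qp13_ne_zero _)))
                (ph13_ne (mul_ne_zero (C_ne_zero.mpr (by positivity)) (qp13_ne_zero _)))
                (ph13_ne (mul_ne_zero (C_ne_zero.mpr (by positivity)) (qp13_ne_zero _))) ?_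
              linear_combination (-(C ((p:ℝ)+3) * qp13 (p+1))) * qp13_rec p
                + ((X+1) * qp13 (p+1)^2) * hK
            · -- E2 : i = m+1
              have him : (i:ℕ) = m+1 := by omega
              have hpm : p = m := by omega
              have hu : U i j = ((m:ℝ)+3)/((m:ℝ)+2) := by
                rw [hU i j, if_pos hij, hκ i, if_pos (by omega)]
                push_cast
                ring
              have hl : L i j = ((m:ℝ)+3)/((m:ℝ)+2) := by
                rw [hL i j, if_pos hij, hκ i, if_pos (by omega)]
                push_cast
                ring
              rw [hu, hl, hpm, him]
              rw [sv13_of_le (le_refl m), sv13_top1 m]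
              have hC2 : C (((m:ℝ)+3)/((m:ℝ)+2)) * C ((m:ℝ)+2) = C ((m:ℝ)+3) := by
                rw [← C_mul]
                congr 1
                field_simp
              have hR : rp13 m = X * qp13 (m+1) + qp13 (m+1) - X * qp13 m := rfl
              refine pivot_step13 _ _ _ _ _
                (ph13_ne (mul_ne_zero (C_ne_zero.mpr (by positivity)) (qp13_ne_zero _)))
                (ph13_ne (mul_ne_zero (C_ne_zero.mpr (by positivity)) (qp13_ne_zero _)))
                (ph13_ne (mul_ne_zero (C_ne_zero.mpr (by positivity)) (qp13_ne_zero _))) ?_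
              linear_combination ((X+1) * qp13 (m+1)^2 * C ((m:ℝ)+2)) * hC2
                + (-(C ((m:ℝ)+2) * C ((m:ℝ)+3) * qp13 (m+1))) * hR
          · by_cases hjs : (j:ℕ) = (i:ℕ)+1 ∧ (j:ℕ) ≤ m+1
            · -- B3 : superdiagonal
              have hSa : Sm13 m av j = 0 := by
                simp only [Sm13, Matrix.of_apply]
                rw [if_neg (by omega), if_neg (by omega), if_neg (by omega)]
              have hSi : Sm13 m i j = -(ph13 X) := by
                simp only [Sm13, Matrix.of_apply]
                rw [if_neg (by omega), if_pos (by omega)]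
              have hu : U i j = -1 := by
                rw [hU i j, if_neg (fun h => absurd (congrArg Fin.val h) (by omega)), if_pos (by omega)]
              have hl : L i j = 0 := by
                rw [hL i j, if_neg (fun h => absurd (congrArg Fin.val h) (by omega)), if_neg (by omega)]
              rw [hSa, hSi, hu, hl, mul_zero, zero_add]
              rw [show (X * C (-1:ℝ) + C 0 : ℝ[X]) = -X by simp, map_neg]
            · by_cases hj4 : (i:ℕ) = m ∧ (j:ℕ) = m+2
              · -- B4 : branch edge (m, m+2)
                have hSa : Sm13 m av j = 0 := by
                  simp only [Sm13, Matrix.of_apply]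
                  rw [if_neg (by omega), if_neg (by omega), if_neg (by omega)]
                have hSi : Sm13 m i j = -(ph13 X) := by
                  simp only [Sm13, Matrix.of_apply]
                  rw [if_neg (by omega), if_pos (by omega)]
                have hu : U i j = -1 := by
                  rw [hU i j, if_neg (fun h => absurd (congrArg Fin.val h) (by omega)), if_pos (by omega)]
                have hl : L i j = 0 := by
                  rw [hL i j, if_neg (fun h => absurd (congrArg Fin.val h) (by omega)), if_neg (by omega)]
                rw [hSa, hSi, hu, hl, mul_zero, zero_add]
                rw [show (X * C (-1:ℝ) + C 0 : ℝ[X]) = -X by simp, map_neg]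
              · by_cases hj5 : (i:ℕ) = m+1 ∧ (j:ℕ) = m+2
                · -- B5 : entry (m+1, m+2)
                  have hSa : Sm13 m av j = -(ph13 X) := by
                    simp only [Sm13, Matrix.of_apply]
                    rw [if_neg (by omega), if_pos (by omega)]
                  have hSi : Sm13 m i j = -(ph13 X) / sv13 m m := by
                    simp only [Sm13, Matrix.of_apply]
                    rw [if_neg (by omega), if_neg (by omega), if_pos (by omega)]
                  have hu : U i j = 0 := by
                    rw [hU i j, if_neg (fun h => absurd (congrArg Fin.val h) (by omega)), if_neg (by omega)]
                  have hl : L i j = 0 := by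
                    rw [hL i j, if_neg (fun h => absurd (congrArg Fin.val h) (by omega)), if_neg (by omega)]
                  have hpm : p = m := by omega
                  rw [hSa, hSi, hu, hl, hpm]
                  rw [show (X * C (0:ℝ) + C 0 : ℝ[X]) = 0 by simp, map_zero]
                  ring
                · -- B6 : remaining zero entries
                  have hSa : Sm13 m av j = 0 := by
                    simp only [Sm13, Matrix.of_apply]
                    rw [if_neg (by omega), if_neg (by omega), if_neg (by omega)]
                  have hSi : Sm13 m i j = 0 := by
                    simp only [Sm13, Matrix.of_apply]
                    rw [if_neg (by omega), if_neg (by omega), if_neg (by omega)]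
                  have hu : U i j = 0 := by
                    rw [hU i j, if_neg (fun h => absurd (congrArg Fin.val h) (by omega)), if_neg (by omega)]
                  have hl : L i j = 0 := by
                    rw [hL i j, if_neg (fun h => absurd (congrArg Fin.val h) (by omega)), if_neg (by omega)]
                  rw [hSa, hSi, hu, hl]
                  simp
  rw [hfact, Matrix.det_mul]
  have hdetT : (Tm13 m).det = 1 := by
    have ht : (Tm13 m).BlockTriangular OrderDual.toDual := by
      intro i j hij
      have h : (i:ℕ) < (j:ℕ) := hij
      simp only [Tm13, Matrix.of_apply]
      rw [if_neg (by omega), if_neg (by omega), if_neg (by omega)]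
    rw [Matrix.det_of_lowerTriangular _ ht]
    apply Finset.prod_eq_one
    intro i _
    simp [Tm13]
  have hdetS : (Sm13 m).det = ∏ i ∈ Finset.range (m+3), sv13 m i := by
    have hs : (Sm13 m).BlockTriangular id := by
      intro i j hij
      have h : (j:ℕ) < (i:ℕ) := hij
      simp only [Sm13, Matrix.of_apply]
      rw [if_neg (by omega), if_neg (by omega), if_neg (by omega)]
    rw [Matrix.det_of_upperTriangular hs]
    calc (∏ i : Fin (m+3), Sm13 m i i)
        = ∏ i : Fin (m+3), sv13 m ((i:ℕ)) :=
          Finset.prod_congr rfl (fun i _ => by simp [Sm13])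
      _ = ∏ i ∈ Finset.range (m+3), sv13 m i :=
          Fin.prod_univ_eq_prod_range (fun i => sv13 m i) (m+3)
  rw [hdetT, hdetS, one_mul]
  have hsplit : (∏ i ∈ Finset.range (m+3), sv13 m i)
      = (∏ i ∈ Finset.range (m+1), sv13 m i) * sv13 m (m+1) * sv13 m (m+2) := by
    rw [show m+3 = (m+1)+1+1 by omega, Finset.prod_range_succ, Finset.prod_range_succ]
  rw [hsplit, sv13_prod m (m+1) le_rfl, sv13_top1 m, sv13_top2 m]
  have hκprod : (∏ i : Fin (m+3), κ i) = 2*((m:ℝ)+3)/((m:ℝ)+2) := by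
    have hm2 : ((m:ℝ)+2) ≠ 0 := by positivity
    have hm3 : ((m:ℝ)+3) ≠ 0 := by positivity
    have h1 : ∀ i : Fin (m+3), κ i =
        if m+1 ≤ (i:ℕ) then ((m:ℝ)+3)/((m:ℝ)+2)
          else (((i:ℕ):ℝ)+2)^2/((((i:ℕ):ℝ)+1)*(((i:ℕ):ℝ)+3)) := by
      intro i
      rw [hκ i, show m+3-2 = m+1 from rfl]
      split_ifs with h
      · push_cast
        rw [show ((m:ℝ)+3-1) = ((m:ℝ)+2) by ring]
      · rfl
    calc (∏ i : Fin (m+3), κ i)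
        = ∏ t ∈ Finset.range (m+3), (if m+1 ≤ t then ((m:ℝ)+3)/((m:ℝ)+2)
            else ((t:ℝ)+2)^2/(((t:ℝ)+1)*((t:ℝ)+3))) := by
          rw [← Fin.prod_univ_eq_prod_range]
          exact Finset.prod_congr rfl (fun i _ => h1 i)
      _ = (∏ t ∈ Finset.range (m+1), (if m+1 ≤ t then ((m:ℝ)+3)/((m:ℝ)+2)
            else ((t:ℝ)+2)^2/(((t:ℝ)+1)*((t:ℝ)+3))))
          * (((m:ℝ)+3)/((m:ℝ)+2)) * (((m:ℝ)+3)/((m:ℝ)+2)) := by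
          rw [show m+3 = (m+1)+1+1 by omega, Finset.prod_range_succ, Finset.prod_range_succ,
            if_pos (by omega : m+1 ≤ m+1), if_pos (by omega : m+1 ≤ m+1+1)]
      _ = (2*(((m+1:ℕ):ℝ)+1)/(((m+1:ℕ):ℝ)+2)) * (((m:ℝ)+3)/((m:ℝ)+2)) * (((m:ℝ)+3)/((m:ℝ)+2)) := by
          rw [← kappa_prod13 (m+1)]
          refine congrArg (fun z => z * (((m:ℝ)+3)/((m:ℝ)+2)) * (((m:ℝ)+3)/((m:ℝ)+2))) ?_
          exact Finset.prod_congr rfl (fun t ht => by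
            rw [if_neg (by simpa using Finset.mem_range.mp ht)])
      _ = 2*((m:ℝ)+3)/((m:ℝ)+2) := by
          push_cast
          field_simp
          ring
  have hicc : (1 + (∑ j ∈ Finset.Icc 1 (m+3-1), 2 * X ^ j) + X ^ (m+3) : ℝ[X])
      = X * (∑ j ∈ Finset.range (m+3), X^j) + (∑ j ∈ Finset.range (m+3), X^j) := by
    rw [show m+3-1 = m+2 from rfl, show m+3 = (m+2)+1 from rfl]
    exact (icc_sum13 (m+2)).symm
  rw [hκprod, hicc]
  rw [show (((m+1:ℕ)):ℝ)+2 = ((m:ℝ)+3) from by push_cast; ring]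
  have hd1 : ph13 (C ((m:ℝ)+3)) ≠ 0 := ph13_ne (C_ne_zero.mpr (by positivity))
  have hd2 : ph13 (C ((m:ℝ)+2) * qp13 (m+1)) ≠ 0 :=
    ph13_ne (mul_ne_zero (C_ne_zero.mpr (by positivity)) (qp13_ne_zero _))
  have hd3 : ph13 (C ((m:ℝ)+2) * rp13 m) ≠ 0 :=
    ph13_ne (mul_ne_zero (C_ne_zero.mpr (by positivity)) (rp13_ne_zero _))
  rw [div_mul_div_comm, div_mul_div_comm,
    div_eq_iff (mul_ne_zero (mul_ne_zero hd1 hd2) hd3)]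
  simp only [← map_mul]
  refine congrArg ph13 ?_
  rw [gp13_eq m]
  have hKf : C (2*((m:ℝ)+3)/((m:ℝ)+2)) * (C ((m:ℝ)+2) * C ((m:ℝ)+2))
      = C 2 * (C ((m:ℝ)+2) * C ((m:ℝ)+3)) := by
    rw [← C_mul, ← C_mul, ← C_mul, ← C_mul]
    congr 1
    field_simp
  linear_combination (-(C ((m:ℝ)+3) * (X+1) * qp13 (m+1) * rp13 m
    * (∑ j ∈ Finset.range (m+3), (X:ℝ[X])^j))) * hKf
end

section
/- Let ε be the unique real number with ε > 2 and ε^3 − 2ε^2 − ε + 1 = 0, set (a_1, a_2, a_3, a_4) = (ε, ε^2 − 1, 2ε^2 − ε − 1, ε(ε − 1)) and κ_i = a_i^2/(a_i^2 − 1). Let U be the 4×4 real matrix with diagonal entries κ_1, κ_2, κ_3, κ_4, entry −1 in positions (1,2) and (3,4), entry −2 in position (2,3), and 0 elsewhere; let L be the 4×4 real matrix with diagonal entries κ_1, κ_2, κ_3, κ_4, entries −1 in positions (2,1), (3,2), (4,3), and 0 elsewhere. Then in ℝ[X] one has det(X·U + L) = (κ_1 κ_2 κ_3 κ_4) · (X^4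 + (ε^2 − 2ε)X^3 + (2 − ε)X^2 + (ε^2 − 2ε)X + 1). -/
open Polynomial

set_option maxHeartbeats 1000000 in
/-- Type `F_4`: with `ε` the unique real root `> 2` of `ε³ - 2ε² - ε + 1 = 0`,
`(a_1,…,a_4) = (ε, ε²-1, 2ε²-ε-1, ε(ε-1))` and `κ_i = a_i²/(a_i²-1)`, one has
`det(X·U_κ + L_κ) = (κ₁κ₂κ₃κ₄)·(X⁴ + (ε²-2ε)X³ + (2-ε)X² + (ε²-2ε)X + 1)`. -/
theorem stmt14 (ε : ℝ) (hε2 : 2 < ε) (hεeq : ε ^ 3 - 2 * ε ^ 2 - ε + 1 = 0)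
    (a₁ a₂ a₃ a₄ : ℝ)
    (ha₁ : a₁ = ε) (ha₂ : a₂ = ε ^ 2 - 1) (ha₃ : a₃ = 2 * ε ^ 2 - ε - 1)
    (ha₄ : a₄ = ε * (ε - 1))
    (κ₁ κ₂ κ₃ κ₄ : ℝ)
    (hκ₁ : κ₁ = a₁ ^ 2 / (a₁ ^ 2 - 1)) (hκ₂ : κ₂ = a₂ ^ 2 / (a₂ ^ 2 - 1))
    (hκ₃ : κ₃ = a₃ ^ 2 / (a₃ ^ 2 - 1)) (hκ₄ : κ₄ = a₄ ^ 2 / (a₄ ^ 2 - 1))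
    (U L : Matrix (Fin 4) (Fin 4) ℝ)
    (hU : U = !![κ₁, -1, 0, 0; 0, κ₂, -2, 0; 0, 0, κ₃, -1; 0, 0, 0, κ₄])
    (hL : L = !![κ₁, 0, 0, 0; -1, κ₂, 0, 0; 0, -1, κ₃, 0; 0, 0, -1, κ₄]) :
    ((X : ℝ[X]) • U.map C + L.map C).det =
      C (κ₁ * κ₂ * κ₃ * κ₄) *
        (X ^ 4 + C (ε ^ 2 - 2 * ε) * X ^ 3 + C (2 - ε) * X ^ 2 +
          C (ε ^ 2 - 2 * ε) * X + 1) := by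
  subst a₁ a₂ a₃ a₄
  have hd1 : (ε : ℝ) ^ 2 - 1 ≠ 0 := by nlinarith
  have hd2 : ((ε : ℝ) ^ 2 - 1) ^ 2 - 1 ≠ 0 := by nlinarith
  have hd3 : ((2 * ε ^ 2 - ε - 1) : ℝ) ^ 2 - 1 ≠ 0 := by nlinarith
  have hd4 : ((ε * (ε - 1)) : ℝ) ^ 2 - 1 ≠ 0 := by nlinarith
  have hS : κ₁ * κ₂ + 2 * (κ₁ * κ₄) + κ₃ * κ₄
      = κ₁ * κ₂ * κ₃ * κ₄ * (4 + 2 * ε - ε ^ 2) := by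
    subst κ₁ κ₂ κ₃ κ₄
    have hd3' : (ε * (ε * 2 - 1) - 1) ^ 2 - 1 ≠ 0 := by convert hd3 using 2; ring
    have hd4' : ε ^ 2 * (ε - 1) ^ 2 - 1 ≠ 0 := by convert hd4 using 2; ring
    field_simp
    linear_combination ((8*ε^6 - 8*ε^7 - 70*ε^8 + 78*ε^9 + 221*ε^10 - 331*ε^11
      - 180*ε^12 + 561*ε^13 - 581*ε^14 + 715*ε^15 + 576*ε^16 - 4233*ε^17
      + 4608*ε^18 + 3802*ε^19 - 12236*ε^20 + 6280*ε^21 + 9329*ε^22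
      - 14209*ε^23 + 2820*ε^24 + 8477*ε^25 - 7361*ε^26 + 111*ε^27
      + 3050*ε^28 - 1603*ε^29 - 56*ε^30 + 344*ε^31 - 128*ε^32 + 16*ε^33)
      + (-2)*ε^1 + (-1)*ε^2 + (3)*ε^3 + (4)*ε^4 + (1)*ε^5 + (-7)*ε^6 + (-15)*ε^7 + (90)*ε^8 + (-73)*ε^9 + (-233)*ε^10 + (335)*ε^11 + (180)*ε^12 + (-561)*ε^13 + (581)*ε^14 + (-715)*ε^15 + (-576)*ε^16 + (4233)*ε^17 + (-4608)*ε^18 + (-3802)*ε^19 + (12236)*ε^20 + (-6280)*ε^21 + (-9329)*ε^22 + (14209)*ε^23 + (-2820)*ε^24 + (-8477)*ε^25 + (7361)*ε^26 + (-111)*ε^27 + (-3050)*ε^28 + (1603)*ε^29 + (56)*ε^30 + (-344)*ε^31 + (128)*ε^32 + (-16)*ε^33) * hεeq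
  have hK : κ₁ * κ₂ * κ₃ * κ₄ * (4 + 3 * ε - 2 * ε ^ 2) = 1 := by
    subst κ₁ κ₂ κ₃ κ₄
    have hd3' : (ε * (ε * 2 - 1) - 1) ^ 2 - 1 ≠ 0 := by convert hd3 using 2; ring
    have hd4' : ε ^ 2 * (ε - 1) ^ 2 - 1 ≠ 0 := by convert hd4 using 2; ring
    field_simp
    linear_combination ((4*ε^3 + 2*ε^4 - 5*ε^5 - 8*ε^6 - 16*ε^7 + 35*ε^8 +
      19*ε^9 - 49*ε^10 + 6*ε^11 + 20*ε^12 - 8*ε^13)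
      + (-8)*ε^3 + (-4)*ε^4 + (6)*ε^5 + (14)*ε^6 + (33)*ε^7 + (-64)*ε^8 + (-21)*ε^9 + (69)*ε^10 + (-14)*ε^11 + (-20)*ε^12 + (8)*ε^13) * hεeq
  have hCS : (C κ₁ * C κ₂ + 2 * (C κ₁ * C κ₄) + C κ₃ * C κ₄ : ℝ[X])
      = C κ₁ * C κ₂ * C κ₃ * C κ₄ * (4 + 2 * C ε - C ε ^ 2) := by
    simpa only [map_add, map_mul, map_pow, map_ofNat, map_one, map_sub] using
      congrArg (⇑(C : ℝ →+* ℝ[X])) hS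
  have hCK : (C κ₁ * C κ₂ * C κ₃ * C κ₄ * (4 + 3 * C ε - 2 * C ε ^ 2) : ℝ[X]) = 1 := by
    simpa only [map_add, map_mul, map_pow, map_ofNat, map_one, map_sub] using
      congrArg (⇑(C : ℝ →+* ℝ[X])) hK
  subst U L
  simp [Matrix.det_succ_row_zero, Fin.sum_univ_succ, Matrix.smul_apply,
    Matrix.submatrix_apply, Fin.succAbove, map_ofNat, map_sub, map_pow, map_mul]
  linear_combination (-(X * (X + 1) ^ 2)) * hCS - X ^ 2 * hCK
end

section
/- Let n ≥ 1 and h ≥ 2 be integers, let d : {1,…,n} → ℤ be nondecreasing with 2 ≤ d_i ≤ h for all i and d_i + d_{n+1−i} = h + 2 for all i ∈ {1,…,n}, and let S be a finite multiset of integers contained in {1, …, h−1} such that for every j ∈ {1, …, h−1} the multiplicity of j in S equals the number of indices i ∈ {1,…,n} with d_i ≥ j + 1. Set ζ = exp(2πi/(h+2)) ∈ ℂ. Then in ℂ[X] one has the polynomial identity (1 + X + X^2 + … + X^{h+1})^n = ∏_{i=1}^{n} (X − ζ^{d_i}) · ∏_{s ∈ S} (X − ζ^{s})(X − ζ^{−s}).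 -/
open Polynomial

/-- The identity `((X^{h+2}-1)/(X-1))^n = 𝒟(X) · ∏_{s ∈ S} (X-ζˢ)(X-ζ⁻ˢ)`:
given degrees `d_1 ≤ … ≤ d_n` with `2 ≤ d_i ≤ h` and `d_i + d_{n+1-i} = h+2`,
and a multiset `S` of integers in `[1, h-1]` whose multiplicity at `j`
equals `#{i : d_i ≥ j+1}` (Kostant's theorem), one has, with
`ζ = exp(2πi/(h+2))`,
`(1 + X + ⋯ + X^{h+1})^n = ∏_i (X - ζ^{d_i}) · ∏_{s ∈ S} (X-ζˢ)(X-ζ⁻ˢ)`. -/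
theorem stmt18 (n h : ℕ) (hn : 1 ≤ n) (hh : 2 ≤ h)
    (d : ℕ → ℤ)
    (hmono : ∀ i j, 1 ≤ i → i ≤ j → j ≤ n → d i ≤ d j)
    (hlb : ∀ i, 1 ≤ i → i ≤ n → 2 ≤ d i)
    (hub : ∀ i, 1 ≤ i → i ≤ n → d i ≤ (h : ℤ))
    (hsym : ∀ i, 1 ≤ i → i ≤ n → d i + d (n + 1 - i) = (h : ℤ) + 2)
    (S : Multiset ℤ)
    (hSrange : ∀ s ∈ S, 1 ≤ s ∧ s ≤ (h : ℤ) - 1)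
    (hScount : ∀ j : ℕ, 1 ≤ j → j ≤ h - 1 →
      S.count (j : ℤ) =
        ((Finset.Icc 1 n).filter (fun i => (j : ℤ) + 1 ≤ d i)).card)
    (ζ : ℂ) (hζ : ζ = Complex.exp (2 * Real.pi * Complex.I / (h + 2))) :
    (∑ k ∈ Finset.range (h + 2), (X : ℂ[X]) ^ k) ^ n =
      (∏ i ∈ Finset.Icc 1 n, (X - C (ζ ^ d i))) *
        (S.map fun s => (X - C (ζ ^ s)) * (X - C (ζ ^ (-s)))).prod := by
  classical
  -- ζ is a primitive (h+2)-th root of unity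
  have hprim : IsPrimitiveRoot ζ (h + 2) := by
    have := Complex.isPrimitiveRoot_exp (h + 2) (by omega)
    rw [show ((h + 2 : ℕ) : ℂ) = (h : ℂ) + 2 by push_cast; ring] at this
    rwa [hζ]
  have hζ0 : ζ ≠ 0 := by
    intro h0
    have h1 := hprim.pow_eq_one
    rw [h0] at h1
    simp [zero_pow (by omega : h + 2 ≠ 0)] at h1
  have hone : ζ ^ ((h : ℤ) + 2) = 1 := by
    have h1 := hprim.pow_eq_one
    rw [show ((h : ℤ) + 2) = ((h + 2 : ℕ) : ℤ) by push_cast; ring, zpow_natCast, h1]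
  have hzneg : ∀ s : ℤ, ζ ^ ((h : ℤ) + 2 - s) = ζ ^ (-s) := fun s => by
    rw [sub_eq_add_neg, zpow_add₀ hζ0, hone, one_mul]
  -- geometric sum factorization
  have hgeom : (∑ k ∈ Finset.range (h + 2), (X : ℂ[X]) ^ k)
      = ∏ k ∈ Finset.range (h + 1), (X - C (ζ ^ ((k : ℤ) + 1))) := by
    have hfac : (X : ℂ[X]) ^ (h + 2) - C 1
        = ∏ i ∈ Finset.range (h + 2), (X - C (ζ ^ i * 1)) :=
      X_pow_sub_C_eq_prod hprim (by omega) (one_pow _)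
    have hXne : (X - C (1 : ℂ)) ≠ 0 := X_sub_C_ne_zero 1
    apply mul_right_cancel₀ hXne
    rw [C_1, geom_sum_mul, ← C_1, hfac, Finset.prod_range_succ']
    simp only [pow_zero, one_mul, mul_one]
    norm_cast
  -- counting lemmas
  have cS : ∀ a : ℤ, 1 ≤ a →
      S.count a = ((Finset.Icc 1 n).filter (fun i => a + 1 ≤ d i)).card := by
    intro a ha
    by_cases hle : a ≤ (h : ℤ) - 1
    · lift a to ℕ using (by omega : (0 : ℤ) ≤ a) with j
      exact hScount j (by omega) (by omega)
    · have h0 : S.count a = 0 := Multiset.count_eq_zero.2 (fun hmem => by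
        have := hSrange a hmem; omega)
      rw [h0]
      symm
      rw [Finset.card_eq_zero, Finset.filter_eq_empty_iff]
      intro i hi
      rw [Finset.mem_Icc] at hi
      have := hub i hi.1 hi.2
      omega
  have key : ∀ a : ℤ,
      ((Finset.Icc 1 n).filter (fun i => ((h : ℤ) + 2 - a) + 1 ≤ d i)).card
        = ((Finset.Icc 1 n).filter (fun i => d i ≤ a - 1)).card := by
    intro a
    apply Finset.card_bij' (fun i _ => n + 1 - i) (fun i _ => n + 1 - i)
    · intro i hi
      rw [Finset.mem_filter, Finset.mem_Icc] at hi ⊢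
      have hs := hsym i hi.1.1 hi.1.2
      constructor
      · omega
      · omega
    · intro i hi
      rw [Finset.mem_filter, Finset.mem_Icc] at hi ⊢
      have hs := hsym i hi.1.1 hi.1.2
      constructor
      · omega
      · omega
    · intro i hi
      rw [Finset.mem_filter, Finset.mem_Icc] at hi
      omega
    · intro i hi
      rw [Finset.mem_filter, Finset.mem_Icc] at hi
      omega
  have part : ∀ a : ℤ,
      ((Finset.Icc 1 n).filter (fun i => a = d i)).card
        + ((Finset.Icc 1 n).filter (fun i => a + 1 ≤ d i)).card
        + ((Finset.Icc 1 n).filter (fun i => d i ≤ a - 1)).card = n := by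
    intro a
    rw [Finset.card_filter, Finset.card_filter, Finset.card_filter,
      ← Finset.sum_add_distrib, ← Finset.sum_add_distrib]
    rw [Finset.sum_congr rfl (fun i _ => by split_ifs <;> omega :
      ∀ i ∈ Finset.Icc 1 n,
        ((if a = d i then 1 else 0) + (if a + 1 ≤ d i then 1 else 0)
          + (if d i ≤ a - 1 then 1 else 0)) = 1)]
    simp [Nat.card_Icc]
  -- the multiset identity
  have hEF : ((Finset.Icc 1 n).val.map d) + S + S.map (fun s => (h : ℤ) + 2 - s)
      = n • ((Finset.range (h + 1)).val.map (fun k : ℕ => (k : ℤ) + 1)) := by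
    ext a
    rw [Multiset.count_add, Multiset.count_add, Multiset.count_nsmul]
    have hc1 : Multiset.count a ((Finset.Icc 1 n).val.map d)
        = ((Finset.Icc 1 n).filter (fun i => a = d i)).card := by
      rw [Multiset.count_map, ← Finset.filter_val, Finset.card_val]
    have hginj : Function.Injective (fun s : ℤ => (h : ℤ) + 2 - s) := by
      intro x y hxy; simpa using hxy
    have hc3 : Multiset.count a (S.map (fun s => (h : ℤ) + 2 - s))
        = S.count ((h : ℤ) + 2 - a) := by
      have := Multiset.count_map_eq_count' (fun s : ℤ => (h : ℤ) + 2 - s) S hginj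
        ((h : ℤ) + 2 - a)
      simpa [show (h : ℤ) + 2 - ((h : ℤ) + 2 - a) = a by ring] using this
    have hc4 : Multiset.count a ((Finset.range (h + 1)).val.map (fun k : ℕ => (k : ℤ) + 1))
        = ((Finset.range (h + 1)).filter (fun k : ℕ => a = (k : ℤ) + 1)).card := by
      rw [Multiset.count_map, ← Finset.filter_val, Finset.card_val]
    rw [hc1, hc3, hc4]
    by_cases hcond : 1 ≤ a ∧ a ≤ (h : ℤ) + 1
    · have hr : ((Finset.range (h + 1)).filter (fun k : ℕ => a = (k : ℤ) + 1)).card = 1 := by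
        rw [Finset.card_eq_one]
        refine ⟨(a - 1).toNat, ?_⟩
        ext k
        simp only [Finset.mem_filter, Finset.mem_range, Finset.mem_singleton]
        omega
      rw [hr, mul_one, cS a hcond.1, cS ((h : ℤ) + 2 - a) (by omega), key a]
      exact part a
    · have hr : ((Finset.range (h + 1)).filter (fun k : ℕ => a = (k : ℤ) + 1)).card = 0 := by
        rw [Finset.card_eq_zero, Finset.filter_eq_empty_iff]
        intro k hk
        rw [Finset.mem_range] at hk
        omega
      have h1 : ((Finset.Icc 1 n).filter (fun i => a = d i)).card = 0 := by
        rw [Finset.card_eq_zero, Finset.filter_eq_empty_iff]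
        intro i hi
        rw [Finset.mem_Icc] at hi
        have := hlb i hi.1 hi.2
        have := hub i hi.1 hi.2
        omega
      have h2 : S.count a = 0 := Multiset.count_eq_zero.2 (fun hmem => by
        have := hSrange a hmem; omega)
      have h3 : S.count ((h : ℤ) + 2 - a) = 0 := Multiset.count_eq_zero.2 (fun hmem => by
        have := hSrange _ hmem; omega)
      rw [hr, h1, h2, h3]
      simp
    -- final assembly
  have hR : (∏ i ∈ Finset.Icc 1 n, (X - C (ζ ^ d i))) *
        (S.map fun s => (X - C (ζ ^ s)) * (X - C (ζ ^ (-s)))).prod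
      = (((((Finset.Icc 1 n).val.map d) + S + S.map (fun s => (h : ℤ) + 2 - s)).map
          (fun a => (X : ℂ[X]) - C (ζ ^ a))).prod) := by
    rw [Multiset.map_add, Multiset.map_add, Multiset.prod_add, Multiset.prod_add]
    rw [Multiset.map_map, Multiset.map_map]
    rw [Finset.prod_eq_multiset_prod]
    rw [mul_assoc]
    congr 1
    rw [Multiset.prod_map_mul]
    congr 1
    refine congrArg Multiset.prod (Multiset.map_congr rfl fun s _ => ?_)
    simp only [Function.comp_apply, hzneg s]
  have hL : (∑ k ∈ Finset.range (h + 2), (X : ℂ[X]) ^ k) ^ n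
      = (((n • ((Finset.range (h + 1)).val.map (fun k : ℕ => (k : ℤ) + 1))).map
          (fun a => (X : ℂ[X]) - C (ζ ^ a))).prod) := by
    rw [hgeom, Multiset.map_nsmul, Multiset.prod_nsmul, Multiset.map_map,
      Finset.prod_eq_multiset_prod]
    rfl
  rw [hL, hR, hEF]
end
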